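/- arXiv:1610.09687 — 4 statements merged into one kernel-verified Lean document; each statement's English description precedes it below -/
import Mathlib

section
/- Let (Ω, 𝓕, P) be a probability space and for each T > 0 let Y_T : Ω → ℝ be a random variable with |Y_T| ≤ M·T almost surely, where M ≥ 0. Suppose there are constants ε > 0, C > 0, λ > 0 such that P(|Y_T| ≥ ε T) ≤ C exp(−λ T) for all T > 0. Then limsup_{T → ∞} T⁻¹ log E[exp(β Y_T)] ≤ max( |β| ε, |β| M − λ ) for every β ∈ ℝ. -/
/-!
On `{|Y_T| < ε T}` the integrand `exp (β Y_T)` is at most `exp (|β| ε T)`, and on the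
complementary event, of probability at most `C exp (-λ T)`, it is at most `exp (|β| M T)`.
Hence `E[exp (β Y_T)] ≤ (1 + C) exp (m T)` with `m = max (|β| ε) (|β| M - λ)`, so
`H_T(β) ≤ m + T⁻¹ log (1 + C)`. The bound `|Y_T| ≤ M T` also gives `H_T(β) ≥ -|β| M`, which
makes the limsup well defined.
-/

open MeasureTheory Filter Real

lemma abs_mul_le_abs_mul_of_abs_le {β x b : ℝ} (h : |x| ≤ b) : |β * x| ≤ |β| * b := by
  rw [abs_mul]
  exact mul_le_mul_of_nonneg_left h (abs_nonneg β)

section ExpMoment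

variable {Ω : Type*} [MeasurableSpace Ω] {P : Measure Ω} {X : Ω → ℝ} {b : ℝ}

lemma integrable_exp_mul_of_abs_le [IsFiniteMeasure P] (hX : Measurable X)
    (hXb : ∀ᵐ ω ∂P, |X ω| ≤ b) (β : ℝ) : Integrable (fun ω ↦ exp (β * X ω)) P := by
  refine (integrable_const (exp (|β| * b))).mono' (hX.const_mul β).exp.aestronglyMeasurable ?_
  filter_upwards [hXb] with ω hω
  rw [norm_of_nonneg (exp_pos _).le, exp_le_exp]
  exact (abs_le.1 (abs_mul_le_abs_mul_of_abs_le hω)).2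

lemma exp_neg_le_integral_exp_mul [IsProbabilityMeasure P] (hX : Measurable X)
    (hXb : ∀ᵐ ω ∂P, |X ω| ≤ b) (β : ℝ) : exp (-(|β| * b)) ≤ ∫ ω, exp (β * X ω) ∂P := by
  calc exp (-(|β| * b)) = ∫ _, exp (-(|β| * b)) ∂P := by simp
    _ ≤ ∫ ω, exp (β * X ω) ∂P := by
      refine integral_mono_ae (integrable_const _) (integrable_exp_mul_of_abs_le hX hXb β) ?_
      filter_upwards [hXb] with ω hω
      exact exp_le_exp.2 (abs_le.1 (abs_mul_le_abs_mul_of_abs_le hω)).1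

lemma integral_exp_mul_le_add [IsProbabilityMeasure P] (hX : Measurable X)
    (hXb : ∀ᵐ ω ∂P, |X ω| ≤ b) (β a : ℝ) :
    ∫ ω, exp (β * X ω) ∂P ≤ exp (|β| * a) + (P {ω | a ≤ |X ω|}).toReal * exp (|β| * b) := by
  set A := {ω | a ≤ |X ω|}
  have hA : MeasurableSet A := measurableSet_le measurable_const hX.abs
  have hdom : ∀ᵐ ω ∂P, exp (β * X ω) ≤ exp (|β| * a) + A.indicator (fun _ ↦ exp (|β| * b)) ω := by
    filter_upwards [hXb] with ω hω
    by_cases hωA : ω ∈ A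
    · rw [Set.indicator_of_mem hωA]
      have := exp_le_exp.2 (abs_le.1 (abs_mul_le_abs_mul_of_abs_le (β := β) hω)).2
      linarith [exp_pos (|β| * a)]
    · rw [Set.indicator_of_notMem hωA, add_zero, exp_le_exp]
      have hlt : |X ω| ≤ a := (not_le.1 hωA).le
      exact (abs_le.1 (abs_mul_le_abs_mul_of_abs_le hlt)).2
  calc ∫ ω, exp (β * X ω) ∂P
      ≤ ∫ ω, (exp (|β| * a) + A.indicator (fun _ ↦ exp (|β| * b)) ω) ∂P :=
        integral_mono_ae (integrable_exp_mul_of_abs_le hX hXb β)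
          ((integrable_const _).add ((integrable_const _).indicator hA)) hdom
    _ = exp (|β| * a) + (P A).toReal * exp (|β| * b) := by
        rw [integral_add (integrable_const _) ((integrable_const _).indicator hA),
          integral_const, integral_indicator_const _ hA]
        simp [measureReal_def]

lemma integral_exp_mul_le_of_tail [IsProbabilityMeasure P] (hX : Measurable X)
    (hXb : ∀ᵐ ω ∂P, |X ω| ≤ b) {a C c : ℝ} (hC : 0 ≤ C)
    (htail : (P {ω | a ≤ |X ω|}).toReal ≤ C * exp (-c)) (β : ℝ) :
    ∫ ω, exp (β * X ω) ∂P ≤ (1 + C) * exp (max (|β| * a) (|β| * b - c)) := by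
  have hsmall : exp (|β| * a) ≤ exp (max (|β| * a) (|β| * b - c)) :=
    exp_le_exp.2 (le_max_left _ _)
  have hlarge : (P {ω | a ≤ |X ω|}).toReal * exp (|β| * b)
      ≤ C * exp (max (|β| * a) (|β| * b - c)) :=
    calc (P {ω | a ≤ |X ω|}).toReal * exp (|β| * b)
        ≤ C * exp (-c) * exp (|β| * b) := by gcongr
      _ = C * exp (|β| * b - c) := by rw [mul_assoc, ← exp_add]; ring_nf
      _ ≤ C * exp (max (|β| * a) (|β| * b - c)) := by gcongr; exact le_max_right _ _
  linarith [integral_exp_mul_le_add hX hXb β a]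

end ExpMoment

lemma neg_le_inv_mul_log {T x c : ℝ} (hT : 0 < T) (hx : exp (-(c * T)) ≤ x) :
    -c ≤ T⁻¹ * log x := by
  have := log_le_log (exp_pos _) hx
  rw [log_exp] at this
  rw [le_inv_mul_iff₀ hT]
  linarith

lemma inv_mul_log_le {T x A m : ℝ} (hT : 0 < T) (hx : 0 < x) (hA : 0 < A)
    (hxA : x ≤ A * exp (m * T)) : T⁻¹ * log x ≤ m + T⁻¹ * log A := by
  have := log_le_log hx hxA
  rw [log_mul hA.ne' (exp_pos _).ne', log_exp] at this
  rw [inv_mul_le_iff₀ hT, mul_add, mul_inv_cancel_left₀ hT.ne']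
  linarith

lemma limsup_le_of_eventually_le_add_inv_mul {f : ℝ → ℝ} {c m K : ℝ}
    (hlow : ∀ᶠ T in atTop, c ≤ f T) (hup : ∀ᶠ T in atTop, f T ≤ m + T⁻¹ * K) :
    limsup f atTop ≤ m := by
  have hlim : Tendsto (fun T : ℝ ↦ m + T⁻¹ * K) atTop (nhds m) := by
    simpa using tendsto_const_nhds.add (tendsto_inv_atTop_zero.mul_const K)
  calc limsup f atTop ≤ limsup (fun T : ℝ ↦ m + T⁻¹ * K) atTop :=
        limsup_le_limsup hup (isCoboundedUnder_le_of_eventually_le atTop hlow)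
          hlim.isBoundedUnder_le
    _ = m := hlim.limsup_eq

theorem limsup_normalized_log_mgf_le_general {Ω : Type*} [MeasurableSpace Ω] (P : Measure Ω)
    [IsProbabilityMeasure P] (Y : ℝ → Ω → ℝ) (hY : ∀ T, Measurable (Y T))
    (M : ℝ) (hbd : ∀ T > (0 : ℝ), ∀ᵐ ω ∂P, |Y T ω| ≤ M * T)
    (ε C lam : ℝ) (hC : 0 < C)
    (htail : ∀ T > (0 : ℝ), (P {ω | ε * T ≤ |Y T ω|}).toReal ≤ C * Real.exp (-lam * T)) :
    ∀ β : ℝ,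
      Filter.limsup
          (fun T : ℝ => T⁻¹ * Real.log (∫ ω, Real.exp (β * Y T ω) ∂P)) Filter.atTop
        ≤ max (|β| * ε) (|β| * M - lam) := by
  intro β
  refine limsup_le_of_eventually_le_add_inv_mul (c := -(|β| * M)) (K := log (1 + C)) ?_ ?_
    <;> filter_upwards [eventually_gt_atTop 0] with T hT
  · refine neg_le_inv_mul_log hT ?_
    simpa [mul_assoc] using exp_neg_le_integral_exp_mul (hY T) (hbd T hT) β
  · have hmgf := integral_exp_mul_le_of_tail (hY T) (hbd T hT) hC.le
      (by simpa [neg_mul] using htail T hT) β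
    have hexp : max (|β| * (ε * T)) (|β| * (M * T) - lam * T)
        = max (|β| * ε) (|β| * M - lam) * T := by
      rw [max_mul_of_nonneg _ _ hT.le]; ring_nf
    rw [hexp] at hmgf
    exact inv_mul_log_le hT ((exp_pos _).trans_le (exp_neg_le_integral_exp_mul (hY T)
      (hbd T hT) β)) (by linarith) hmgf

/-- Limsup bound for the normalized log-moment-generating function:
`limsup_{T → ∞} T⁻¹ log E[exp(β Y_T)] ≤ max(|β| ε, |β| M − λ)`. -/
theorem limsup_normalized_log_mgf_le {Ω : Type*} [MeasurableSpace Ω] (P : Measure Ω)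
    [IsProbabilityMeasure P] (Y : ℝ → Ω → ℝ) (hY : ∀ T, Measurable (Y T))
    (M : ℝ) (hM : 0 ≤ M) (hbd : ∀ T > (0 : ℝ), ∀ᵐ ω ∂P, |Y T ω| ≤ M * T)
    (ε C lam : ℝ) (hε : 0 < ε) (hC : 0 < C) (hlam : 0 < lam)
    (htail : ∀ T > (0 : ℝ), (P {ω | ε * T ≤ |Y T ω|}).toReal ≤ C * Real.exp (-lam * T)) :
    ∀ β : ℝ,
      Filter.limsup
          (fun T : ℝ => T⁻¹ * Real.log (∫ ω, Real.exp (β * Y T ω) ∂P)) Filter.atTop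
        ≤ max (|β| * ε) (|β| * M - lam) :=
  limsup_normalized_log_mgf_le_general P Y hY M hbd ε C lam hC htail
end

section
/- Let (Ω, 𝓕, P) be a probability space, c̄ ∈ ℝ and M ≥ 0 constants, and for each T > 0 let Y_T : Ω → ℝ be a random variable with |Y_T − c̄ T| ≤ M·T almost surely. Assume that for every ε > 0 there exist constants C > 0 and λ > 0 such that P(|Y_T − c̄ T| ≥ ε T) ≤ C exp(−λ T) for all T > 0. Suppose moreover that for every β ∈ ℝ the limit H(β) := lim_{T → ∞} T⁻¹ log E[exp(β Y_T)] exists in ℝ. Then H(0) = 0 and H is differentiable at 0 with H'(0) = c̄. -/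
open MeasureTheory

/-- If `|Y_T − c̄T| ≤ MT` a.s. with exponential concentration
`P(|Y_T − c̄T| ≥ εT) ≤ C exp(−λT)` for every `ε > 0`, and the limiting normalized
log-moment-generating function `H(β) = lim_T T⁻¹ log E exp(β Y_T)` exists, then
`H(0) = 0` and `H` is differentiable at `0` with `H'(0) = c̄`. -/
theorem limit_log_mgf_derivAt_zero {Ω : Type*} [MeasurableSpace Ω] (P : Measure Ω)
    [IsProbabilityMeasure P] (Y : ℝ → Ω → ℝ) (hY : ∀ T, Measurable (Y T))
    (cbar M : ℝ) (hM : 0 ≤ M)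
    (hbd : ∀ T > (0 : ℝ), ∀ᵐ ω ∂P, |Y T ω - cbar * T| ≤ M * T)
    (htail : ∀ ε > (0 : ℝ), ∃ C > (0 : ℝ), ∃ lam > (0 : ℝ), ∀ T > (0 : ℝ),
      (P {ω | ε * T ≤ |Y T ω - cbar * T|}).toReal ≤ C * Real.exp (-lam * T))
    (H : ℝ → ℝ)
    (hH : ∀ β : ℝ,
      Filter.Tendsto (fun T : ℝ => T⁻¹ * Real.log (∫ ω, Real.exp (β * Y T ω) ∂P))
        Filter.atTop (nhds (H β))) :
    H 0 = 0 ∧ HasDerivAt H cbar 0 := by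
  -- Integrability of exp(β Y_T)
  have hint : ∀ (β : ℝ) (T : ℝ), 0 < T → Integrable (fun ω => Real.exp (β * Y T ω)) P := by
    intro β T hT
    refine Integrable.mono' (integrable_const (Real.exp (|β| * ((|cbar| + M) * T))))
      (((hY T).const_mul β).exp).aestronglyMeasurable ?_
    filter_upwards [hbd T hT] with ω hω
    rw [Real.norm_eq_abs, abs_of_pos (Real.exp_pos _)]
    apply Real.exp_le_exp.2
    have h1 : |Y T ω| ≤ (|cbar| + M) * T := by
      have := abs_sub_abs_le_abs_sub (Y T ω) (cbar * T)
      have h2 : |cbar * T| = |cbar| * T := by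
        rw [abs_mul, abs_of_pos hT]
      nlinarith
    calc β * Y T ω ≤ |β * Y T ω| := le_abs_self _
      _ = |β| * |Y T ω| := abs_mul _ _
      _ ≤ |β| * ((|cbar| + M) * T) := by
          exact mul_le_mul_of_nonneg_left h1 (abs_nonneg β)
  have hEpos : ∀ (β : ℝ) (T : ℝ), 0 < T → 0 < ∫ ω, Real.exp (β * Y T ω) ∂P := by
    intro β T hT
    exact integral_exp_pos (hint β T hT)
  -- H 0 = 0
  have h0 : H 0 = 0 := by
    have h2 : Filter.Tendsto (fun T : ℝ =>
        T⁻¹ * Real.log (∫ ω, Real.exp ((0:ℝ) * Y T ω) ∂P)) Filter.atTop (nhds 0) := by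
      have heq : (fun T : ℝ => T⁻¹ * Real.log (∫ ω, Real.exp ((0:ℝ) * Y T ω) ∂P))
          = fun _ => (0:ℝ) := by
        funext T
        simp
      rw [heq]
      exact tendsto_const_nhds
    exact tendsto_nhds_unique (hH 0) h2
  -- Key estimate
  have key : ∀ ε > (0:ℝ), ∃ δ > (0:ℝ), ∀ β : ℝ, |β| ≤ δ → |H β - cbar * β| ≤ ε * |β| := by
    intro ε hε
    obtain ⟨C, hC, lam, hlam, htl⟩ := htail ε hε
    refine ⟨lam / (M + 1), by positivity, ?_⟩
    intro β hβ
    have hβM : |β| * M ≤ lam := by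
      have h1 : |β| * (M + 1) ≤ lam := by
        rw [le_div_iff₀ (by linarith : (0:ℝ) < M + 1)] at hβ
        exact hβ
      nlinarith [abs_nonneg β]
    set b : ℝ := β * cbar + ε * |β| with hb
    set b' : ℝ := β * cbar - ε * |β| with hb'
    -- measurable sets
    have hA : ∀ T : ℝ, MeasurableSet {ω | ε * T ≤ |Y T ω - cbar * T|} := by
      intro T
      exact measurableSet_le measurable_const (((hY T).sub measurable_const).abs)
    -- Upper bound: H β ≤ b
    have hup : H β ≤ b := by
      have hptw : ∀ T > (0:ℝ), T⁻¹ * Real.log (∫ ω, Real.exp (β * Y T ω) ∂P)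
          ≤ T⁻¹ * Real.log (1 + C) + b := by
        intro T hT
        set A := {ω | ε * T ≤ |Y T ω - cbar * T|} with hAdef
        have hintT := hint β T hT
        have hsplit := integral_add_compl (hA T) hintT
        -- bound on A
        have hIA : ∫ ω in A, Real.exp (β * Y T ω) ∂P
            ≤ Real.exp ((β * cbar + |β| * M) * T) * (P A).toReal := by
          have hmono : ∫ ω in A, Real.exp (β * Y T ω) ∂P
              ≤ ∫ _ in A, Real.exp ((β * cbar + |β| * M) * T) ∂P := by
            refine setIntegral_mono_on_ae hintT.integrableOn
              (integrableOn_const (measure_lt_top P A).ne) (hA T) ?_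
            filter_upwards [hbd T hT] with ω hω _
            apply Real.exp_le_exp.2
            have h1 : β * (Y T ω - cbar * T) ≤ |β| * (M * T) := by
              calc β * (Y T ω - cbar * T) ≤ |β * (Y T ω - cbar * T)| := le_abs_self _
                _ = |β| * |Y T ω - cbar * T| := abs_mul _ _
                _ ≤ |β| * (M * T) := mul_le_mul_of_nonneg_left hω (abs_nonneg β)
            nlinarith
          rw [setIntegral_const, smul_eq_mul, mul_comm] at hmono
          exact hmono
        have hPA : (P A).toReal ≤ C * Real.exp (-lam * T) := htl T hT
        have hIA2 : ∫ ω in A, Real.exp (β * Y T ω) ∂P ≤ C * Real.exp (b * T) := by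
          calc ∫ ω in A, Real.exp (β * Y T ω) ∂P
              ≤ Real.exp ((β * cbar + |β| * M) * T) * (C * Real.exp (-lam * T)) := by
                refine le_trans hIA ?_
                exact mul_le_mul_of_nonneg_left hPA (Real.exp_pos _).le
            _ = C * Real.exp ((β * cbar + |β| * M - lam) * T) := by
                rw [mul_left_comm, ← Real.exp_add]
                congr 1
                ring
            _ ≤ C * Real.exp (b * T) := by
                refine mul_le_mul_of_nonneg_left (Real.exp_le_exp.2 ?_) hC.le
                have : 0 ≤ ε * |β| := by positivity
                nlinarith
        -- bound on Aᶜ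
        have hIAc : ∫ ω in Aᶜ, Real.exp (β * Y T ω) ∂P ≤ Real.exp (b * T) := by
          have hmono : ∫ ω in Aᶜ, Real.exp (β * Y T ω) ∂P
              ≤ ∫ _ in Aᶜ, Real.exp (b * T) ∂P := by
            refine setIntegral_mono_on hintT.integrableOn
              (integrableOn_const (measure_lt_top P Aᶜ).ne) (hA T).compl ?_
            intro ω hω
            apply Real.exp_le_exp.2
            have hω' : |Y T ω - cbar * T| < ε * T := by
              simpa [hAdef] using hω
            have h1 : β * (Y T ω - cbar * T) ≤ |β| * (ε * T) := by
              calc β * (Y T ω - cbar * T) ≤ |β| * |Y T ω - cbar * T| := by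
                    rw [← abs_mul]; exact le_abs_self _
                _ ≤ |β| * (ε * T) := mul_le_mul_of_nonneg_left hω'.le (abs_nonneg β)
            nlinarith
          rw [setIntegral_const, smul_eq_mul] at hmono
          have hle1 : ((P Aᶜ).toReal : ℝ) ≤ 1 := by
            have := prob_le_one (μ := P) (s := Aᶜ)
            simpa using ENNReal.toReal_le_of_le_ofReal zero_le_one (by simpa using this)
          calc ∫ ω in Aᶜ, Real.exp (β * Y T ω) ∂P
              ≤ (P Aᶜ).toReal * Real.exp (b * T) := hmono
            _ ≤ 1 * Real.exp (b * T) :=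
                mul_le_mul_of_nonneg_right hle1 (Real.exp_pos _).le
            _ = Real.exp (b * T) := one_mul _
        have hE : ∫ ω, Real.exp (β * Y T ω) ∂P ≤ (1 + C) * Real.exp (b * T) := by
          rw [← hsplit]; nlinarith [hIA2, hIAc]
        have hlog : Real.log (∫ ω, Real.exp (β * Y T ω) ∂P) ≤ Real.log (1 + C) + b * T := by
          calc Real.log (∫ ω, Real.exp (β * Y T ω) ∂P)
              ≤ Real.log ((1 + C) * Real.exp (b * T)) := Real.log_le_log (hEpos β T hT) hE
            _ = Real.log (1 + C) + b * T := by
                rw [Real.log_mul (by positivity) (Real.exp_pos _).ne', Real.log_exp]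
        calc T⁻¹ * Real.log (∫ ω, Real.exp (β * Y T ω) ∂P)
            ≤ T⁻¹ * (Real.log (1 + C) + b * T) :=
              mul_le_mul_of_nonneg_left hlog (inv_nonneg.2 hT.le)
          _ = T⁻¹ * Real.log (1 + C) + b := by
              field_simp
      have hlim2 : Filter.Tendsto (fun T : ℝ => T⁻¹ * Real.log (1 + C) + b)
          Filter.atTop (nhds b) := by
        have : Filter.Tendsto (fun T : ℝ => T⁻¹ * Real.log (1 + C)) Filter.atTop (nhds 0) := by
          simpa using tendsto_inv_atTop_zero.mul_const (Real.log (1 + C))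
        simpa using this.add_const b
      refine le_of_tendsto_of_tendsto (hH β) hlim2 ?_
      filter_upwards [Filter.eventually_gt_atTop (0:ℝ)] with T hT
      exact hptw T hT
    -- Lower bound: b' ≤ H β
    have hlow : b' ≤ H β := by
      have hsmall : ∀ᶠ T in Filter.atTop, C * Real.exp (-lam * T) ≤ 1/2 := by
        have h1 : Filter.Tendsto (fun T : ℝ => C * Real.exp (-lam * T))
            Filter.atTop (nhds 0) := by
          have h2 : Filter.Tendsto (fun T : ℝ => -lam * T) Filter.atTop Filter.atBot := by
            exact Filter.Tendsto.const_mul_atTop_of_neg (neg_neg_iff_pos.2 hlam) Filter.tendsto_id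
          simpa using (Real.tendsto_exp_atBot.comp h2).const_mul C
        exact h1.eventually (eventually_le_nhds (by norm_num))
      have hptw : ∀ᶠ T in Filter.atTop, b' + T⁻¹ * Real.log (1/2)
          ≤ T⁻¹ * Real.log (∫ ω, Real.exp (β * Y T ω) ∂P) := by
        filter_upwards [Filter.eventually_gt_atTop (0:ℝ), hsmall] with T hT hsm
        set A := {ω | ε * T ≤ |Y T ω - cbar * T|} with hAdef
        have hintT := hint β T hT
        have hPAc : (1:ℝ)/2 ≤ (P Aᶜ).toReal := by
          have hcompl : P Aᶜ = 1 - P A := prob_compl_eq_one_sub (hA T)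
          have htr : (P Aᶜ).toReal = 1 - (P A).toReal := by
            rw [hcompl, ENNReal.toReal_sub_of_le prob_le_one ENNReal.one_ne_top]
            simp
          have hPA : (P A).toReal ≤ 1/2 := le_trans (htl T hT) hsm
          rw [htr]; linarith
        have hIAc : Real.exp (b' * T) * (1/2) ≤ ∫ ω in Aᶜ, Real.exp (β * Y T ω) ∂P := by
          have hmono : ∫ _ in Aᶜ, Real.exp (b' * T) ∂P
              ≤ ∫ ω in Aᶜ, Real.exp (β * Y T ω) ∂P := by
            refine setIntegral_mono_on
              (integrableOn_const (measure_lt_top P Aᶜ).ne)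
              hintT.integrableOn (hA T).compl ?_
            intro ω hω
            apply Real.exp_le_exp.2
            have hω' : |Y T ω - cbar * T| < ε * T := by
              simpa [hAdef] using hω
            have h1 : -( |β| * (ε * T)) ≤ β * (Y T ω - cbar * T) := by
              have h2 : |β * (Y T ω - cbar * T)| ≤ |β| * (ε * T) := by
                rw [abs_mul]
                exact mul_le_mul_of_nonneg_left hω'.le (abs_nonneg β)
              linarith [neg_abs_le (β * (Y T ω - cbar * T))]
            nlinarith
          rw [setIntegral_const, smul_eq_mul] at hmono
          calc Real.exp (b' * T) * (1/2)
              ≤ Real.exp (b' * T) * (P Aᶜ).toReal := by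
                exact mul_le_mul_of_nonneg_left hPAc (Real.exp_pos _).le
            _ = (P Aᶜ).toReal * Real.exp (b' * T) := mul_comm _ _
            _ ≤ _ := hmono
        have hE : Real.exp (b' * T) * (1/2) ≤ ∫ ω, Real.exp (β * Y T ω) ∂P := by
          refine le_trans hIAc (setIntegral_le_integral hintT ?_)
          filter_upwards with ω
          exact (Real.exp_pos _).le
        have hlog : b' * T + Real.log (1/2) ≤ Real.log (∫ ω, Real.exp (β * Y T ω) ∂P) := by
          have := Real.log_le_log (by positivity) hE
          rwa [Real.log_mul (Real.exp_pos _).ne' (by norm_num), Real.log_exp] at this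
        calc b' + T⁻¹ * Real.log (1/2)
            = T⁻¹ * (b' * T + Real.log (1/2)) := by field_simp
          _ ≤ T⁻¹ * Real.log (∫ ω, Real.exp (β * Y T ω) ∂P) :=
              mul_le_mul_of_nonneg_left hlog (inv_nonneg.2 hT.le)
      have hlim2 : Filter.Tendsto (fun T : ℝ => b' + T⁻¹ * Real.log (1/2))
          Filter.atTop (nhds b') := by
        have : Filter.Tendsto (fun T : ℝ => T⁻¹ * Real.log (1/2)) Filter.atTop (nhds 0) := by
          simpa using tendsto_inv_atTop_zero.mul_const (Real.log (1/2))
        simpa using (this.const_add b')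
      exact le_of_tendsto_of_tendsto hlim2 (hH β) hptw
    rw [abs_le]
    constructor
    · nlinarith [hlow, hb', mul_comm β cbar]
    · nlinarith [hup, hb, mul_comm β cbar]
  refine ⟨h0, ?_⟩
  rw [hasDerivAt_iff_isLittleO]
  rw [Asymptotics.isLittleO_iff]
  intro c hc
  obtain ⟨δ, hδ, hkey⟩ := key c hc
  rw [Metric.eventually_nhds_iff]
  refine ⟨δ, hδ, ?_⟩
  intro x hx
  rw [Real.dist_eq, sub_zero] at hx
  have := hkey x hx.le
  simp only [h0, sub_zero, smul_eq_mul, Real.norm_eq_abs]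
  calc |H x - x * cbar| = |H x - cbar * x| := by rw [mul_comm]
    _ ≤ c * |x| := this
end

section
/- Let P and μ be finite measures on a measurable space (E, 𝓔), and let v : E → ℝ be a measurable function such that v² is integrable with respect to P + μ. Then |∫ v dP − ∫ v dμ| ≤ ( ∫ v² d(P + μ) )^{1/2} · ( ‖P − μ‖_{TV} )^{1/2}, where ‖P − μ‖_{TV} denotes the total variation of the signed measure P − μ, i.e. the total mass of the total-variation measure |P − μ|. -/
open MeasureTheory

/-- Cauchy–Bunyakovsky–Schwarz estimate against the total variation:
`|∫ v dP − ∫ v dμ| ≤ (∫ v² d(P + μ))^{1/2} · ‖P − μ‖_{TV}^{1/2}`. -/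
theorem abs_integral_sub_le_sqrt_tv {E : Type*} [MeasurableSpace E]
    (P μ : Measure E) [IsFiniteMeasure P] [IsFiniteMeasure μ]
    (v : E → ℝ) (hv : Measurable v)
    (hint : Integrable (fun x => (v x) ^ 2) (P + μ)) :
    |(∫ x, v x ∂P) - ∫ x, v x ∂μ| ≤
      Real.sqrt (∫ x, (v x) ^ 2 ∂(P + μ)) *
        Real.sqrt (((P.toSignedMeasure - μ.toSignedMeasure).totalVariation Set.univ).toReal) := by
  set s := P.toSignedMeasure - μ.toSignedMeasure with hs
  obtain ⟨i, hi₁, hi₂, hi₃, hpos, hneg⟩ := s.toJordanDecomposition_spec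
  set ρ := s.toJordanDecomposition.posPart with hρ
  set σ := s.toJordanDecomposition.negPart with hσ
  have hsA : ∀ A, MeasurableSet A → s A = (P A).toReal - (μ A).toReal := by
    intro A hA
    rw [hs, VectorMeasure.sub_apply, Measure.toSignedMeasure_apply_measurable hA,
      Measure.toSignedMeasure_apply_measurable hA]
    rfl
  -- positive part is dominated by P
  have hρP : ρ ≤ P := by
    rw [Measure.le_iff]
    intro A hA
    have h1 : ρ A = ENNReal.ofReal (s (i ∩ A)) := by
      rw [hpos, SignedMeasure.toMeasureOfZeroLE_apply s hi₂ hi₁ hA]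
      rw [ENNReal.ofReal]
      congr 1
      exact (Real.toNNReal_of_nonneg _).symm
    calc ρ A = ENNReal.ofReal (s (i ∩ A)) := h1
      _ ≤ ENNReal.ofReal ((P (i ∩ A)).toReal) := by
          apply ENNReal.ofReal_le_ofReal
          rw [hsA _ (hi₁.inter hA)]
          exact sub_le_self _ ENNReal.toReal_nonneg
      _ = P (i ∩ A) := ENNReal.ofReal_toReal (measure_ne_top _ _)
      _ ≤ P A := measure_mono Set.inter_subset_right
  -- negative part is dominated by μ
  have hσμ : σ ≤ μ := by
    rw [Measure.le_iff]
    intro A hA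
    have h1 : σ A = ENNReal.ofReal (-s (iᶜ ∩ A)) := by
      rw [hneg, SignedMeasure.toMeasureOfLEZero_apply s hi₃ hi₁.compl hA]
      rw [ENNReal.ofReal]
      congr 1
      exact (Real.toNNReal_of_nonneg _).symm
    calc σ A = ENNReal.ofReal (-s (iᶜ ∩ A)) := h1
      _ ≤ ENNReal.ofReal ((μ (iᶜ ∩ A)).toReal) := by
          apply ENNReal.ofReal_le_ofReal
          rw [hsA _ (hi₁.compl.inter hA), neg_sub]
          exact sub_le_self _ ENNReal.toReal_nonneg
      _ = μ (iᶜ ∩ A) := ENNReal.ofReal_toReal (measure_ne_top _ _)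
      _ ≤ μ A := measure_mono Set.inter_subset_right
  have hτle : ρ + σ ≤ P + μ := add_le_add hρP hσμ
  -- the measure identity P + σ = μ + ρ
  have hmeq : P + σ = μ + ρ := by
    ext A hA
    have hsm := s.toSignedMeasure_toJordanDecomposition
    have h2 : (ρ A).toReal - (σ A).toReal = (P A).toReal - (μ A).toReal := by
      have := congrArg (fun m : SignedMeasure E => m A) hsm
      simpa [JordanDecomposition.toSignedMeasure, VectorMeasure.sub_apply,
        Measure.toSignedMeasure_apply_measurable hA, hsA _ hA, ← hρ, ← hσ, hA, Measure.real_def] using this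
    have h3 : (P A).toReal + (σ A).toReal = (μ A).toReal + (ρ A).toReal := by linarith
    have h4 : ((P + σ) A).toReal = ((μ + ρ) A).toReal := by
      rw [Measure.add_apply, Measure.add_apply,
        ENNReal.toReal_add (measure_ne_top _ _) (measure_ne_top _ _),
        ENNReal.toReal_add (measure_ne_top _ _) (measure_ne_top _ _), h3]
    have hPσ : (P + σ) A ≠ ⊤ := by
      rw [Measure.add_apply]; exact ENNReal.add_ne_top.2 ⟨measure_ne_top _ _, measure_ne_top _ _⟩
    have hμρ : (μ + ρ) A ≠ ⊤ := by
      rw [Measure.add_apply]; exact ENNReal.add_ne_top.2 ⟨measure_ne_top _ _, measure_ne_top _ _⟩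
    exact (ENNReal.toReal_eq_toReal_iff' hPσ hμρ).1 h4
  -- integrability facts
  have hv2 : MemLp v 2 (P + μ) :=
    (memLp_two_iff_integrable_sq hv.aestronglyMeasurable).2 hint
  have hvint : Integrable v (P + μ) := hv2.integrable (by norm_num)
  have hvP : Integrable v P := hvint.left_of_add_measure
  have hvμ : Integrable v μ := hvint.right_of_add_measure
  have hvτ' : Integrable v (ρ + σ) := hvint.mono_measure hτle
  have hvρ : Integrable v ρ := hvτ'.left_of_add_measure
  have hvσ : Integrable v σ := hvτ'.right_of_add_measure
  -- train of integral identities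
  have hintEq : (∫ x, v x ∂P) - ∫ x, v x ∂μ = (∫ x, v x ∂ρ) - ∫ x, v x ∂σ := by
    have h5 : (∫ x, v x ∂P) + ∫ x, v x ∂σ = (∫ x, v x ∂μ) + ∫ x, v x ∂ρ := by
      rw [← integral_add_measure hvP hvσ, ← integral_add_measure hvμ hvρ, hmeq]
    linarith
  -- totalVariation is ρ + σ
  have hTV : s.totalVariation = ρ + σ := rfl
  set τ := ρ + σ with hτ
  have hv2τ : MemLp v 2 τ :=
    (memLp_two_iff_integrable_sq hv.aestronglyMeasurable).2 (hint.mono_measure hτle)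
  have hvτ : Integrable v τ := hv2τ.integrable (by norm_num)
  -- Cauchy–Schwarz on τ
  have hCS : ∫ x, |v x| ∂τ ≤
      Real.sqrt (∫ x, (v x) ^ 2 ∂τ) * Real.sqrt ((τ Set.univ).toReal) := by
    have hpq : Real.HolderConjugate 2 2 := ⟨by norm_num, by norm_num, by norm_num⟩
    have hf : MemLp (fun x => |v x|) (ENNReal.ofReal 2) τ := by
      rw [show ENNReal.ofReal 2 = 2 by norm_num]
      simpa using hv2τ.norm
    have hg : MemLp (fun _ : E => (1 : ℝ)) (ENNReal.ofReal 2) τ := by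
      rw [show ENNReal.ofReal 2 = 2 by norm_num]
      exact memLp_const 1
    have := integral_mul_le_Lp_mul_Lq_of_nonneg hpq
      (Filter.Eventually.of_forall fun x => abs_nonneg (v x))
      (Filter.Eventually.of_forall fun _ => zero_le_one) hf hg
    simp only [mul_one, one_pow] at this
    calc ∫ x, |v x| ∂τ
        ≤ (∫ x, |v x| ^ (2 : ℝ) ∂τ) ^ ((1 : ℝ)/2) * (∫ x, (1:ℝ) ^ (2:ℝ) ∂τ) ^ ((1:ℝ)/2) := by
          simpa using this
      _ = Real.sqrt (∫ x, (v x) ^ 2 ∂τ) * Real.sqrt ((τ Set.univ).toReal) := by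
          rw [Real.sqrt_eq_rpow, Real.sqrt_eq_rpow]
          congr 2
          · apply integral_congr_ae
            filter_upwards with x
            rw [show (2:ℝ) = ((2:ℕ):ℝ) by norm_num, Real.rpow_natCast, sq_abs]
          · simp [integral_const, smul_eq_mul, Measure.real_def]
  -- monotonicity of the second moment
  have hmom : ∫ x, (v x) ^ 2 ∂τ ≤ ∫ x, (v x) ^ 2 ∂(P + μ) :=
    integral_mono_measure hτle
      (Filter.Eventually.of_forall fun x => sq_nonneg (v x)) hint
  -- put everything together
  have habs : |(∫ x, v x ∂P) - ∫ x, v x ∂μ| ≤ ∫ x, |v x| ∂τ := by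
    rw [hintEq, hτ, integral_add_measure hvρ.abs hvσ.abs]
    calc |(∫ x, v x ∂ρ) - ∫ x, v x ∂σ|
        ≤ |∫ x, v x ∂ρ| + |∫ x, v x ∂σ| := abs_sub _ _
      _ ≤ (∫ x, |v x| ∂ρ) + ∫ x, |v x| ∂σ :=
          add_le_add
            (by simpa [Real.norm_eq_abs] using norm_integral_le_integral_norm (μ := ρ) v)
            (by simpa [Real.norm_eq_abs] using norm_integral_le_integral_norm (μ := σ) v)
  calc |(∫ x, v x ∂P) - ∫ x, v x ∂μ|
      ≤ ∫ x, |v x| ∂τ := habs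
    _ ≤ Real.sqrt (∫ x, (v x) ^ 2 ∂τ) * Real.sqrt ((τ Set.univ).toReal) := hCS
    _ ≤ Real.sqrt (∫ x, (v x) ^ 2 ∂(P + μ)) *
        Real.sqrt ((s.totalVariation Set.univ).toReal) := by
        apply mul_le_mul (Real.sqrt_le_sqrt hmom) _ (Real.sqrt_nonneg _) (Real.sqrt_nonneg _)
        rw [hTV]
end

section
/- Let (E, 𝓔) be a measurable space, μ a probability measure on E, and for each t ≥ 0 let ν_t be a probability measure on E. Suppose there are constants K ≥ 0 and λ > 0 such that ‖ν_t − μ‖_{TV} ≤ K exp(−λ t) for all t ≥ 0, where ‖·‖_{TV} is the total variation norm of a signed measure. Let v : E → ℝ be measurable with ∫ v dμ = 0 and suppose there is D ≥ 0 with ∫ v² d(ν_t + μ) ≤ D for all t ≥ 0. Then for every ε with 0 < ε < λ/2, exp(ε t) · |∫ v dν_t| ≤ exp(ε t) · D^{1/2} · (K exp(−λ t))^{1/2} for all t ≥ 0, and in particular exp(ε t) · |∫ v dν_t| → 0 as t → ∞. -/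
open MeasureTheory

-- Cauchy–Schwarz on a finite measure: ∫ |v| dm ≤ √(∫ v² dm) · √(m univ)
lemma cbs_aux {E : Type*} [MeasurableSpace E] (m : Measure E) [IsFiniteMeasure m]
    (v : E → ℝ) (hv : Measurable v) (h2 : Integrable (fun x => (v x) ^ 2) m) :
    ∫ x, |v x| ∂m ≤ Real.sqrt (∫ x, (v x) ^ 2 ∂m) * Real.sqrt (m Set.univ).toReal := by
  have habs : MemLp (fun x => |v x|) 2 m := by
    rw [memLp_two_iff_integrable_sq (hv.abs.aestronglyMeasurable)]
    simpa [sq_abs] using h2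
  have hone : MemLp (fun _ : E => (1 : ℝ)) 2 m := memLp_const 1
  have hpq : Real.HolderConjugate 2 2 := by constructor <;> norm_num
  have h := integral_mul_le_Lp_mul_Lq_of_nonneg hpq
    (f := fun x => |v x|) (g := fun _ => (1 : ℝ))
    (Filter.Eventually.of_forall fun x => abs_nonneg _)
    (Filter.Eventually.of_forall fun x => zero_le_one)
    (by simpa using habs) (by simpa using hone)
  simp only [mul_one] at h
  calc ∫ x, |v x| ∂m
      ≤ (∫ x, |v x| ^ (2:ℝ) ∂m) ^ (1/(2:ℝ)) * (∫ x, (1:ℝ) ^ (2:ℝ) ∂m) ^ (1/(2:ℝ)) := h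
    _ = Real.sqrt (∫ x, (v x) ^ 2 ∂m) * Real.sqrt (m Set.univ).toReal := by
        have h1 : (∫ x, |v x| ^ (2:ℝ) ∂m) = ∫ x, (v x) ^ 2 ∂m := by
          apply integral_congr_ae; filter_upwards with x
          rw [show ((2:ℝ) = ((2:ℕ):ℝ)) by norm_num, Real.rpow_natCast, sq_abs]
        have h2' : (∫ x, (1:ℝ) ^ (2:ℝ) ∂m) = (m Set.univ).toReal := by
          simp [Real.one_rpow]; rfl
        rw [h1, h2', Real.sqrt_eq_rpow, Real.sqrt_eq_rpow]

-- Key estimate: |∫ v dν − ∫ v dμ| ≤ √(∫ v² d(ν+μ)) · √(‖ν−μ‖_TV)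
lemma key_est {E : Type*} [MeasurableSpace E] (μ ν : Measure E)
    [IsProbabilityMeasure μ] [IsProbabilityMeasure ν]
    (v : E → ℝ) (hv : Measurable v)
    (h2 : Integrable (fun x => (v x) ^ 2) (ν + μ)) :
    |∫ x, v x ∂ν - ∫ x, v x ∂μ| ≤ Real.sqrt (∫ x, (v x) ^ 2 ∂(ν + μ)) *
      Real.sqrt (((ν.toSignedMeasure - μ.toSignedMeasure).totalVariation Set.univ)).toReal := by
  set ξ : SignedMeasure E := ν.toSignedMeasure - μ.toSignedMeasure with hξ
  set p : Measure E := ξ.toJordanDecomposition.posPart with hp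
  set q : Measure E := ξ.toJordanDecomposition.negPart with hq
  haveI : IsFiniteMeasure p := ξ.toJordanDecomposition.posPart_finite
  haveI : IsFiniteMeasure q := ξ.toJordanDecomposition.negPart_finite
  -- μ + p = ν + q
  have hmeq : μ + p = ν + q := by
    ext A hA
    have h1 : ξ A = (ν A).toReal - (μ A).toReal := Measure.toSignedMeasure_sub_apply hA
    have h2' : ξ.toJordanDecomposition.toSignedMeasure A = (p A).toReal - (q A).toReal := by
      rw [JordanDecomposition.toSignedMeasure, Measure.toSignedMeasure_sub_apply hA]; rfl
    rw [ξ.toSignedMeasure_toJordanDecomposition] at h2'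
    have heq : (ν A).toReal - (μ A).toReal = (p A).toReal - (q A).toReal := by
      rw [← h1, h2']
    simp only [Measure.add_apply]
    have hreal : (μ A).toReal + (p A).toReal = (ν A).toReal + (q A).toReal := by linarith
    have := congrArg ENNReal.ofReal hreal
    rwa [ENNReal.ofReal_add ENNReal.toReal_nonneg ENNReal.toReal_nonneg,
      ENNReal.ofReal_add ENNReal.toReal_nonneg ENNReal.toReal_nonneg,
      ENNReal.ofReal_toReal (measure_ne_top _ _), ENNReal.ofReal_toReal (measure_ne_top _ _),
      ENNReal.ofReal_toReal (measure_ne_top _ _), ENNReal.ofReal_toReal (measure_ne_top _ _)]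
      at this
  obtain ⟨u, hu, hpu, hqu⟩ := ξ.toJordanDecomposition.mutuallySingular
  rw [← hp] at hpu
  rw [← hq] at hqu
  have hpν : p ≤ ν := by
    rw [Measure.le_iff]
    intro A hA
    have h1 : p A ≤ p (A ∩ uᶜ) := by
      calc p A = p (A ∩ uᶜ ∪ A ∩ u) := by
            congr 1; rw [← Set.inter_union_distrib_left]; simp
        _ ≤ p (A ∩ uᶜ) + p (A ∩ u) := measure_union_le _ _
        _ ≤ p (A ∩ uᶜ) + 0 := by
            gcongr; exact le_of_eq (measure_mono_null Set.inter_subset_right hpu)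
        _ = p (A ∩ uᶜ) := add_zero _
    have h2' := congrArg (fun m : Measure E => m (A ∩ uᶜ)) hmeq
    simp only [Measure.add_apply] at h2'
    rw [measure_mono_null Set.inter_subset_right hqu, add_zero] at h2'
    calc p A ≤ p (A ∩ uᶜ) := h1
      _ ≤ μ (A ∩ uᶜ) + p (A ∩ uᶜ) := le_add_self
      _ = ν (A ∩ uᶜ) := h2'
      _ ≤ ν A := measure_mono Set.inter_subset_left
  have hqμ : q ≤ μ := by
    rw [Measure.le_iff]
    intro A hA
    have h1 : q A ≤ q (A ∩ u) := by
      calc q A = q (A ∩ u ∪ A ∩ uᶜ) := by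
            congr 1; rw [← Set.inter_union_distrib_left]; simp
        _ ≤ q (A ∩ u) + q (A ∩ uᶜ) := measure_union_le _ _
        _ ≤ q (A ∩ u) + 0 := by
            gcongr; exact le_of_eq (measure_mono_null Set.inter_subset_right hqu)
        _ = q (A ∩ u) := add_zero _
    have h2' := congrArg (fun m : Measure E => m (A ∩ u)) hmeq
    simp only [Measure.add_apply] at h2'
    rw [measure_mono_null Set.inter_subset_right hpu, add_zero] at h2'
    calc q A ≤ q (A ∩ u) := h1
      _ ≤ ν (A ∩ u) + q (A ∩ u) := le_add_self
      _ = μ (A ∩ u) := h2'.symm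
      _ ≤ μ A := measure_mono Set.inter_subset_left
  -- integrabilities
  have hmem : MemLp v 2 (ν + μ) := (memLp_two_iff_integrable_sq hv.aestronglyMeasurable).2 h2
  have hint : Integrable v (ν + μ) := hmem.integrable one_le_two
  have hintν : Integrable v ν := hint.mono_measure (Measure.le_add_right le_rfl)
  have hintμ : Integrable v μ := hint.mono_measure (Measure.le_add_left le_rfl)
  have hintp : Integrable v p := hintν.mono_measure hpν
  have hintq : Integrable v q := hintμ.mono_measure hqμ
  -- the integral identity
  have hid : ∫ x, v x ∂ν - ∫ x, v x ∂μ = ∫ x, v x ∂p - ∫ x, v x ∂q := by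
    have : ∫ x, v x ∂μ + ∫ x, v x ∂p = ∫ x, v x ∂ν + ∫ x, v x ∂q := by
      rw [← integral_add_measure hintμ hintp, ← integral_add_measure hintν hintq, hmeq]
    linarith
  have hpq_le : p + q ≤ ν + μ := add_le_add hpν hqμ
  have h2pq : Integrable (fun x => (v x) ^ 2) (p + q) := h2.mono_measure hpq_le
  have htv : ξ.totalVariation = p + q := rfl
  calc |∫ x, v x ∂ν - ∫ x, v x ∂μ| = |∫ x, v x ∂p - ∫ x, v x ∂q| := by rw [hid]
    _ ≤ |∫ x, v x ∂p| + |∫ x, v x ∂q| := abs_sub _ _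
    _ ≤ ∫ x, |v x| ∂p + ∫ x, |v x| ∂q := by
        gcongr
        · simpa [Real.norm_eq_abs] using norm_integral_le_integral_norm (μ := p) v
        · simpa [Real.norm_eq_abs] using norm_integral_le_integral_norm (μ := q) v
    _ = ∫ x, |v x| ∂(p + q) := (integral_add_measure hintp.abs hintq.abs).symm
    _ ≤ Real.sqrt (∫ x, (v x) ^ 2 ∂(p + q)) * Real.sqrt ((p + q) Set.univ).toReal :=
        cbs_aux (p + q) v hv h2pq
    _ ≤ Real.sqrt (∫ x, (v x) ^ 2 ∂(ν + μ)) *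
          Real.sqrt (((ν.toSignedMeasure - μ.toSignedMeasure).totalVariation Set.univ)).toReal := by
        rw [← hξ, htv]
        exact mul_le_mul_of_nonneg_right
          (Real.sqrt_le_sqrt (integral_mono_measure hpq_le
            (Filter.Eventually.of_forall fun x => sq_nonneg _) h2))
          (Real.sqrt_nonneg _)

/-- Uniqueness estimate for Case 3: exponential TV-mixing plus a uniform second
moment and centering force `exp(εt)·|∫ v dν_t| → 0` for `0 < ε < λ/2`. -/
theorem exp_mul_abs_integral_tendsto_zero {E : Type*} [MeasurableSpace E]
    (μ : Measure E) [IsProbabilityMeasure μ]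
    (ν : ℝ → Measure E) [∀ t, IsProbabilityMeasure (ν t)]
    (K lam : ℝ) (hK : 0 ≤ K) (hlam : 0 < lam)
    (hTV : ∀ t ≥ (0 : ℝ),
      ((((ν t).toSignedMeasure - μ.toSignedMeasure).totalVariation Set.univ)).toReal
        ≤ K * Real.exp (-lam * t))
    (v : E → ℝ) (hv : Measurable v) (hcen : ∫ x, v x ∂μ = 0)
    (D : ℝ) (hD : 0 ≤ D)
    (hv2int : ∀ t ≥ (0 : ℝ), Integrable (fun x => (v x) ^ 2) (ν t + μ))
    (hv2bd : ∀ t ≥ (0 : ℝ), ∫ x, (v x) ^ 2 ∂(ν t + μ) ≤ D) :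
    ∀ ε : ℝ, 0 < ε → ε < lam / 2 →
      (∀ t ≥ (0 : ℝ), Real.exp (ε * t) * |∫ x, v x ∂(ν t)| ≤
          Real.exp (ε * t) * Real.sqrt D * Real.sqrt (K * Real.exp (-lam * t))) ∧
      Filter.Tendsto (fun t : ℝ => Real.exp (ε * t) * |∫ x, v x ∂(ν t)|)
        Filter.atTop (nhds 0) := by
  intro ε hε hεlam
  have hbd : ∀ t ≥ (0 : ℝ), Real.exp (ε * t) * |∫ x, v x ∂(ν t)| ≤
      Real.exp (ε * t) * Real.sqrt D * Real.sqrt (K * Real.exp (-lam * t)) := by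
    intro t ht
    have h1 := key_est μ (ν t) v hv (hv2int t ht)
    rw [hcen, sub_zero] at h1
    have h2 : Real.sqrt (∫ x, (v x) ^ 2 ∂(ν t + μ)) ≤ Real.sqrt D :=
      Real.sqrt_le_sqrt (hv2bd t ht)
    have h3 : Real.sqrt ((((ν t).toSignedMeasure - μ.toSignedMeasure).totalVariation
        Set.univ)).toReal ≤ Real.sqrt (K * Real.exp (-lam * t)) :=
      Real.sqrt_le_sqrt (hTV t ht)
    have h4 : |∫ x, v x ∂(ν t)| ≤ Real.sqrt D * Real.sqrt (K * Real.exp (-lam * t)) :=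
      le_trans h1 (mul_le_mul h2 h3 (Real.sqrt_nonneg _) (Real.sqrt_nonneg _))
    calc Real.exp (ε * t) * |∫ x, v x ∂(ν t)|
        ≤ Real.exp (ε * t) * (Real.sqrt D * Real.sqrt (K * Real.exp (-lam * t))) :=
          mul_le_mul_of_nonneg_left h4 (Real.exp_nonneg _)
      _ = Real.exp (ε * t) * Real.sqrt D * Real.sqrt (K * Real.exp (-lam * t)) := by ring
  refine ⟨hbd, ?_⟩
  have hfun : ∀ t : ℝ, Real.exp (ε * t) * Real.sqrt D * Real.sqrt (K * Real.exp (-lam * t))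
      = (Real.sqrt D * Real.sqrt K) * Real.exp ((ε - lam / 2) * t) := by
    intro t
    rw [Real.sqrt_mul hK, ← Real.exp_half]
    rw [show (ε - lam / 2) * t = ε * t + (-lam * t) / 2 by ring, Real.exp_add]
    ring
  have hc : ε - lam / 2 < 0 := by linarith
  have h1 : Filter.Tendsto (fun t : ℝ => (ε - lam / 2) * t) Filter.atTop Filter.atBot := by
    exact Filter.Tendsto.const_mul_atTop_of_neg hc Filter.tendsto_id
  have hexp : Filter.Tendsto (fun t : ℝ => Real.exp ((ε - lam / 2) * t))
      Filter.atTop (nhds 0) := Real.tendsto_exp_atBot.comp h1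
  have hg : Filter.Tendsto
      (fun t : ℝ => Real.exp (ε * t) * Real.sqrt D * Real.sqrt (K * Real.exp (-lam * t)))
      Filter.atTop (nhds 0) := by
    simp only [hfun]
    simpa using hexp.const_mul (Real.sqrt D * Real.sqrt K)
  exact squeeze_zero'
    (Filter.Eventually.of_forall fun t => mul_nonneg (Real.exp_nonneg _) (abs_nonneg _))
    ((Filter.eventually_ge_atTop 0).mono fun t ht => hbd t ht) hg
end
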